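/- No rainbow K_r-saturated graph (r ≥ 4) contains two nonadjacent vertices both of degree exactly r−2. Consequently, among the vertices of degree exactly r−2, at most one pair can exist, and any two of them are adjacent. -/

import Mathlib

open SimpleGraph

/-- A proper edge coloring: edges sharing a vertex get distinct colors. -/
def IsProperEdgeColoring {V : Type*} {α : Type*} (G : SimpleGraph V) (c : Sym2 V → α) : Prop :=
  ∀ e ∈ G.edgeSet, ∀ f ∈ G.edgeSet, e ≠ f → (∃ x, x ∈ e ∧ x ∈ f) → c e ≠ c f

/-- A rainbow copy of `H` in `G` under the coloring `c`: an injective homomorphism whose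
edge images receive pairwise distinct colors. -/
def HasRainbowCopy {W V : Type*} {α : Type*} (H : SimpleGraph W) (G : SimpleGraph V)
    (c : Sym2 V → α) : Prop :=
  ∃ f : H →g G, Function.Injective f ∧
    ∀ e ∈ H.edgeSet, ∀ e' ∈ H.edgeSet, e ≠ e' → c (Sym2.map f e) ≠ c (Sym2.map f e')

/-- The graph `G` with the extra edge `xy`. -/
def addEdge {V : Type*} (G : SimpleGraph V) (x y : V) : SimpleGraph V :=
  G ⊔ SimpleGraph.fromEdgeSet {s(x, y)}

/-- `G` is rainbow `H`-saturated. -/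
def RainbowSaturated {V W : Type*} (G : SimpleGraph V) (H : SimpleGraph W) : Prop :=
  (∃ c : Sym2 V → ℕ, IsProperEdgeColoring G c ∧ ¬ HasRainbowCopy H G c) ∧
  ∀ x y : V, x ≠ y → ¬ G.Adj x y →
    ∀ c : Sym2 V → ℕ, IsProperEdgeColoring (addEdge G x y) c →
      HasRainbowCopy H (addEdge G x y) c

/-- The rainbow saturation number: the least number of edges of an `n`-vertex
rainbow `H`-saturated graph. -/
noncomputable def rainbowSatNum {W : Type*} (n : ℕ) (H : SimpleGraph W) : ℕ :=
  sInf {m | ∃ G : SimpleGraph (Fin n), RainbowSaturated G H ∧ G.edgeSet.ncard = m}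

/-!
Let `x, y` be nonadjacent of degree `r - 2` and let `c` be a proper colouring of `G` without
rainbow `K_r`. Recolour `G + xy`: edges at `x` or `y` get fresh odd colours, the other edges keep
`c` (doubled), and `xy` gets an arbitrary even colour `2k`; this is proper for every `k`. A `K_r`
of `G + xy` through `x` has `r - 1 > deg x` neighbours of `x`, so it contains `y` and then all of
`N(x)`; one avoiding `x` and `y` would be a rainbow `K_r` of `G`. By saturation, `N(x)` therefore
lies in a `K_r` together with `x` and `y`, so it is a clique of `G` with an edge `uv`. Taking
`k = c(uv)`, the edges `xy` and `uv` share a colour in every `K_r` through `x`, so `G + xy` has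
a proper colouring without rainbow `K_r`, contradicting saturation.
-/

section

variable {V : Type*}

section AddEdge

variable {G : SimpleGraph V} {x y : V}

lemma addEdge_eq_sup_edge : addEdge G x y = G ⊔ edge x y := rfl

lemma addEdge_comm : addEdge G x y = addEdge G y x := by
  rw [addEdge_eq_sup_edge, addEdge_eq_sup_edge, edge_comm]

lemma addEdge_adj {a b : V} : (addEdge G x y).Adj a b ↔ G.Adj a b ∨ s(a, b) = s(x, y) ∧ a ≠ b := by
  simp [addEdge]

lemma mem_edgeSet_addEdge {e : Sym2 V} (he : e ∈ (addEdge G x y).edgeSet) :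
    e ∈ G.edgeSet ∨ e = s(x, y) := by
  rw [addEdge, edgeSet_sup, edgeSet_fromEdgeSet] at he
  exact he.imp_right fun h => h.1

lemma neighborSet_addEdge (hxy : x ≠ y) :
    (addEdge G x y).neighborSet x = insert y (G.neighborSet x) := by
  ext w
  simp only [mem_neighborSet, addEdge_adj, Set.mem_insert_iff, Sym2.eq, Sym2.rel_iff']
  grind

end AddEdge

lemma SimpleGraph.IsClique.neighborSet_subset_of_ncard_lt {H : SimpleGraph V} {s : Set V} {v : V}
    (hs : H.IsClique s) (hv : v ∈ s) (hfin : (H.neighborSet v).Finite)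
    (hcard : (H.neighborSet v).ncard < s.ncard) : H.neighborSet v ⊆ s := by
  have hsub : s \ {v} ⊆ H.neighborSet v := fun w hw => hs hv hw.1 (Ne.symm hw.2)
  have heq : s \ {v} = H.neighborSet v :=
    Set.eq_of_subset_of_ncard_le hsub (by rw [Set.ncard_sdiff_singleton_of_mem hv]; omega) hfin
  exact heq ▸ Set.sdiff_subset

lemma SimpleGraph.incidenceSet_finite {G : SimpleGraph V} {v : V} (h : (G.neighborSet v).Finite) :
    (G.incidenceSet v).Finite := by
  classical
  have := h.to_subtype
  exact Set.finite_coe_iff.mp (Finite.of_equiv _ (G.incidenceSetEquivNeighborSet v).symm)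

def IsRainbowClique {α : Type*} (G : SimpleGraph V) (c : Sym2 V → α) (s : Set V) : Prop :=
  G.IsClique s ∧ ∀ ⦃a b a' b'⦄, a ∈ s → b ∈ s → a' ∈ s → b' ∈ s → a ≠ b → a' ≠ b' →
    s(a, b) ≠ s(a', b') → c s(a, b) ≠ c s(a', b')

lemma hasRainbowCopy_top_iff {α : Type*} {r : ℕ} {G : SimpleGraph V} {c : Sym2 V → α} :
    HasRainbowCopy (⊤ : SimpleGraph (Fin r)) G c ↔
      ∃ s : Finset V, s.card = r ∧ IsRainbowClique G c s := by
  constructor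
  · rintro ⟨f, hf, hrainbow⟩
    refine ⟨Finset.univ.map ⟨f, hf⟩, by simp, ?_, ?_⟩
    · simpa using isClique_range_copy_top ⟨f, hf⟩
    · simp only [Finset.coe_map, Function.Embedding.coeFn_mk, Finset.coe_univ, Set.image_univ]
      rintro _ _ _ _ ⟨i, rfl⟩ ⟨j, rfl⟩ ⟨i', rfl⟩ ⟨j', rfl⟩ hij hij' hne
      have hij : i ≠ j := ne_of_apply_ne f hij
      have hij' : i' ≠ j' := ne_of_apply_ne f hij'
      simpa using hrainbow s(i, j) (by simpa) s(i', j') (by simpa)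
        (fun h => hne (by simpa using congrArg (Sym2.map f) h))
  · rintro ⟨s, hcard, hclique, hrainbow⟩
    let e := (s.equivFinOfCardEq hcard).symm
    have he : ∀ i, (e i : V) ∈ s := fun i => (e i).2
    have hinj : Function.Injective fun i => (e i : V) := Subtype.val_injective.comp e.injective
    refine ⟨⟨fun i => e i, fun {i j} hij => hclique (he i) (he j) (hinj.ne hij)⟩, hinj, ?_⟩
    rintro ⟨i, j⟩ hij ⟨i', j'⟩ hij' hne
    exact hrainbow (he i) (he j) (he i') (he j') (hinj.ne hij) (hinj.ne hij')
      (fun h => hne ((Sym2.map.injective hinj) h))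

section Recolor

variable [DecidableEq V] {G : SimpleGraph V} {x y : V} {c ι : Sym2 V → ℕ} {k : ℕ}

def recolor (c ι : Sym2 V → ℕ) (x y : V) (k : ℕ) (e : Sym2 V) : ℕ :=
  if e = s(x, y) then 2 * k else if x ∈ e ∨ y ∈ e then 2 * ι e + 1 else 2 * c e

lemma recolor_self : recolor c ι x y k s(x, y) = 2 * k := if_pos rfl

lemma recolor_of_notMem {e : Sym2 V} (hx : x ∉ e) (hy : y ∉ e) :
    recolor c ι x y k e = 2 * c e := by
  have : e ≠ s(x, y) := by rintro rfl; exact hx (Sym2.mem_mk_left x y)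
  simp [recolor, this, hx, hy]

lemma isProperEdgeColoring_recolor (hc : IsProperEdgeColoring G c)
    (hι : Set.InjOn ι (G.incidenceSet x ∪ G.incidenceSet y)) (hxy : ¬G.Adj x y) (k : ℕ) :
    IsProperEdgeColoring (addEdge G x y) (recolor c ι x y k) := by
  have hrecolor : ∀ e ∈ G.edgeSet, recolor c ι x y k e =
      if x ∈ e ∨ y ∈ e then 2 * ι e + 1 else 2 * c e := by
    intro e he
    have : e ≠ s(x, y) := by rintro rfl; exact hxy he
    simp [recolor, this]
  intro e he f hf hne ⟨z, hze, hzf⟩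
  rcases mem_edgeSet_addEdge he with he | rfl <;> rcases mem_edgeSet_addEdge hf with hf | rfl
  · rw [hrecolor e he, hrecolor f hf]
    split_ifs with hex hfx
    · have hι' := hι.ne (hex.imp (⟨he, ·⟩) (⟨he, ·⟩)) (hfx.imp (⟨hf, ·⟩) (⟨hf, ·⟩)) hne
      omega
    · omega
    · omega
    · have := hc e he f hf hne ⟨z, hze, hzf⟩
      omega
  · have hxe : x ∈ e ∨ y ∈ e := by rcases Sym2.mem_iff.mp hzf with rfl | rfl <;> simp [hze]
    rw [hrecolor e he, recolor_self, if_pos hxe]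
    omega
  · have hxf : x ∈ f ∨ y ∈ f := by rcases Sym2.mem_iff.mp hze with rfl | rfl <;> simp [hzf]
    rw [hrecolor f hf, recolor_self, if_pos hxf]
    omega
  · exact absurd rfl hne

lemma IsRainbowClique.of_recolor {s : Set V}
    (hs : IsRainbowClique (addEdge G x y) (recolor c ι x y k) s) (hx : x ∉ s) (hy : y ∉ s) :
    IsRainbowClique G c s := by
  have hcol : ∀ ⦃a b⦄, a ∈ s → b ∈ s → recolor c ι x y k s(a, b) = 2 * c s(a, b) :=
    fun a b ha hb => recolor_of_notMem
      (fun h => by rcases Sym2.mem_iff.mp h with rfl | rfl <;> contradiction)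
      (fun h => by rcases Sym2.mem_iff.mp h with rfl | rfl <;> contradiction)
  refine ⟨Set.sdiff_singleton_eq_self hx ▸ hs.1.sdiff_of_sup_edge, ?_⟩
  intro a b a' b' ha hb ha' hb' hab hab' hne h
  exact hs.2 ha hb ha' hb' hab hab' hne (by rw [hcol ha hb, hcol ha' hb', h])

end Recolor

lemma insert_neighborSet_subset_of_isClique_addEdge {G : SimpleGraph V} {x y : V} {s : Set V}
    (hxy : x ≠ y) (hnadj : ¬G.Adj x y) (hs : (addEdge G x y).IsClique s) (hx : x ∈ s)
    (hfin : (G.neighborSet x).Finite) (hcard : (G.neighborSet x).ncard + 1 < s.ncard) :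
    insert y (G.neighborSet x) ⊆ s := by
  rw [← neighborSet_addEdge hxy]
  refine hs.neighborSet_subset_of_ncard_lt hx ?_ ?_
  · rw [neighborSet_addEdge hxy]
    exact hfin.insert y
  · rwa [neighborSet_addEdge hxy,
      Set.ncard_insert_of_notMem (show y ∉ G.neighborSet x from hnadj) hfin]


lemma IsRainbowClique.insert_neighborSet_subset_of_recolor [DecidableEq V] {G : SimpleGraph V}
    {x y : V} {c ι : Sym2 V → ℕ} {k r : ℕ} {s : Finset V} (hxy : x ≠ y) (hnadj : ¬G.Adj x y)
    (hfx : (G.neighborSet x).Finite) (hfy : (G.neighborSet y).Finite)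
    (hdx : (G.neighborSet x).ncard + 2 ≤ r) (hdy : (G.neighborSet y).ncard + 2 ≤ r)
    (hc_free : ¬HasRainbowCopy (⊤ : SimpleGraph (Fin r)) G c) (hcard : s.card = r)
    (hs : IsRainbowClique (addEdge G x y) (recolor c ι x y k) s) :
    insert x (insert y (G.neighborSet x)) ⊆ s := by
  have hsr : (s : Set V).ncard = r := by rw [Set.ncard_coe_finset, hcard]
  -- A `K_r` avoiding `x` also avoids `y`, so it would be a rainbow `K_r` of `G`.
  have hx : x ∈ s := by
    by_contra hx
    have hy : y ∉ s := fun hy => hx <| insert_neighborSet_subset_of_isClique_addEdge hxy.symm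
      (fun h => hnadj h.symm) (addEdge_comm ▸ hs.1) hy hfy (by omega) (Set.mem_insert x _)
    exact hc_free (hasRainbowCopy_top_iff.mpr ⟨s, hcard, hs.of_recolor hx hy⟩)
  exact Set.insert_subset hx
    (insert_neighborSet_subset_of_isClique_addEdge hxy hnadj hs.1 hx hfx (by omega))

end

theorem stmt17 {V : Type*} (r : ℕ) (hr : 4 ≤ r) (G : SimpleGraph V)
    (hG : RainbowSaturated G (⊤ : SimpleGraph (Fin r))) :
    ∀ x y : V, x ≠ y → (G.neighborSet x).ncard = r - 2 →
      (G.neighborSet y).ncard = r - 2 → G.Adj x y := by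
  classical
  intro x y hxy hdx hdy
  by_contra hnadj
  obtain ⟨⟨c, hc, hc_free⟩, hsat⟩ := hG
  have hfx : (G.neighborSet x).Finite := Set.finite_of_ncard_ne_zero (by omega)
  have hfy : (G.neighborSet y).Finite := Set.finite_of_ncard_ne_zero (by omega)
  obtain ⟨ι, hι⟩ := Set.countable_iff_exists_injOn.mp
    ((incidenceSet_finite hfx).union (incidenceSet_finite hfy)).countable
  have hrainbow : ∀ k, ∃ s : Finset V, IsRainbowClique (addEdge G x y) (recolor c ι x y k) s ∧
      insert x (insert y (G.neighborSet x)) ⊆ s := fun k => by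
    obtain ⟨s, hcard, hs⟩ := hasRainbowCopy_top_iff.mp
      (hsat x y hxy hnadj _ (isProperEdgeColoring_recolor hc hι hnadj k))
    exact ⟨s, hs, hs.insert_neighborSet_subset_of_recolor hxy hnadj hfx hfy (by omega) (by omega)
      hc_free hcard⟩
  obtain ⟨s, hs, hNs⟩ := hrainbow 0
  obtain ⟨u, v, hu, hv, huv⟩ := (Set.one_lt_ncard_iff hfx).mp (by omega)
  have hxs : ∀ w ∈ G.neighborSet x, w ∈ (s : Set V) \ {x} :=
    fun w hw => ⟨hNs (.inr (.inr hw)), hw.ne'⟩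
  have huv_adj : G.Adj u v := hs.1.sdiff_of_sup_edge (hxs u hu) (hxs v hv) huv
  obtain ⟨t, ht, hNt⟩ := hrainbow (c s(u, v))
  have hx_uv : x ∉ s(u, v) := by rw [Sym2.mem_iff]; exact not_or.mpr ⟨hu.ne, hv.ne⟩
  have hy_uv : y ∉ s(u, v) := by
    rw [Sym2.mem_iff]; rintro (rfl | rfl) <;> contradiction
  refine ht.2 (hNt (.inl rfl)) (hNt (.inr (.inl rfl))) (hNt (.inr (.inr hu)))
    (hNt (.inr (.inr hv))) hxy huv (fun h => hx_uv (h ▸ Sym2.mem_mk_left x y)) ?_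
  rw [recolor_self, recolor_of_notMem hx_uv hy_uv]
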